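/- The transformation ρv = ρu + J with J = -((ρ₁-ρ₂)/2) m ∇(μ+αp) and m = (2ρ/(ρ₁+ρ₂)) m^v (scalar mobilities) converts the continuity equation ∂ₜρ + div(ρv) = 0 together with the phase equation ∂ₜφ + div(φv) - div(m^v ∇(μ+αp)) = 0 into div u = 0, given ρ(φ) = ρ₁(1+φ)/2 + ρ₂(1-φ)/2 and α = (ρ₂-ρ₁)/(ρ₁+ρ₂). -/

import Mathlib

open scoped BigOperators

/-- Spatial divergence of a vector field. -/
noncomputable def vdiv {d : ℕ} (F : EuclideanSpace ℝ (Fin d) → EuclideanSpace ℝ (Fin d))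
    (x : EuclideanSpace ℝ (Fin d)) : ℝ :=
  ∑ i, fderiv ℝ F x (EuclideanSpace.single i 1) i

section helpers
variable {d : ℕ} {F G : EuclideanSpace ℝ (Fin d) → EuclideanSpace ℝ (Fin d)}
  {x : EuclideanSpace ℝ (Fin d)}

theorem vdiv_add' (hF : DifferentiableAt ℝ F x) (hG : DifferentiableAt ℝ G x) :
    vdiv (fun y => F y + G y) x = vdiv F x + vdiv G x := by
  unfold vdiv
  rw [← Finset.sum_add_distrib]
  refine Finset.sum_congr rfl fun i _ => ?_
  rw [fderiv_fun_add hF hG]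
  simp

theorem vdiv_const_smul' (c : ℝ) (hF : DifferentiableAt ℝ F x) :
    vdiv (fun y => c • F y) x = c * vdiv F x := by
  unfold vdiv
  rw [Finset.mul_sum]
  refine Finset.sum_congr rfl fun i _ => ?_
  rw [fderiv_fun_const_smul hF c]
  simp

theorem contDiff_gradient' {f : EuclideanSpace ℝ (Fin d) → ℝ} (hf : ContDiff ℝ (⊤ : ℕ∞) f) :
    ContDiff ℝ (⊤ : ℕ∞) (gradient f) := by
  have : gradient f = fun x =>
      (InnerProductSpace.toDual ℝ (EuclideanSpace ℝ (Fin d))).symm (fderiv ℝ f x) := rfl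
  rw [this]
  exact (InnerProductSpace.toDual ℝ (EuclideanSpace ℝ (Fin d))).symm.contDiff.comp
    (hf.fderiv_right (by simp))

end helpers

/-- The transformation ρv = ρu + J, with J = -((ρ₁-ρ₂)/2) m ∇(μ+αp) and
m = (2ρ/(ρ₁+ρ₂)) mᵛ, converts the continuity equation ∂ₜρ + div(ρv) = 0 together
with the phase equation ∂ₜφ + div(φv) - div(mᵛ∇(μ+αp)) = 0 into div u = 0. -/
theorem volume_averaged_velocity_divergence_free {d : ℕ}
    (ρ₁ ρ₂ : ℝ) (h₁ : 0 < ρ₁) (h₂ : 0 < ρ₂)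
    (ρval : ℝ → ℝ) (hρval : ∀ s, ρval s = ρ₁ * (1 + s) / 2 + ρ₂ * (1 - s) / 2)
    (α : ℝ) (hα : α = (ρ₂ - ρ₁) / (ρ₁ + ρ₂))
    (φ μ p mv m : ℝ → EuclideanSpace ℝ (Fin d) → ℝ)
    (v u J : ℝ → EuclideanSpace ℝ (Fin d) → EuclideanSpace ℝ (Fin d))
    -- smoothness of all fields
    (hφ : ContDiff ℝ (⊤ : ℕ∞) fun z : ℝ × EuclideanSpace ℝ (Fin d) => φ z.1 z.2)
    (hμ : ContDiff ℝ (⊤ : ℕ∞) fun z : ℝ × EuclideanSpace ℝ (Fin d) => μ z.1 z.2)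
    (hp : ContDiff ℝ (⊤ : ℕ∞) fun z : ℝ × EuclideanSpace ℝ (Fin d) => p z.1 z.2)
    (hmv : ContDiff ℝ (⊤ : ℕ∞) fun z : ℝ × EuclideanSpace ℝ (Fin d) => mv z.1 z.2)
    (hv : ContDiff ℝ (⊤ : ℕ∞) fun z : ℝ × EuclideanSpace ℝ (Fin d) => v z.1 z.2)
    (hu : ContDiff ℝ (⊤ : ℕ∞) fun z : ℝ × EuclideanSpace ℝ (Fin d) => u z.1 z.2)
    -- positivity of the mixture density along the solution
    (hρpos : ∀ t x, 0 < ρval (φ t x))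
    -- the scaled mobility m = (2ρ/(ρ₁+ρ₂)) mᵛ
    (hm : ∀ t x, m t x = (2 * ρval (φ t x) / (ρ₁ + ρ₂)) * mv t x)
    -- the diffusive flux J = -((ρ₁-ρ₂)/2) m ∇(μ+αp)
    (hJ : ∀ t x, J t x =
      (-(ρ₁ - ρ₂) / 2 * m t x) • gradient (fun y => μ t y + α * p t y) x)
    -- the continuity equation ∂ₜρ + div(ρv) = 0
    (hcont : ∀ t x, deriv (fun s => ρval (φ s x)) t
        + vdiv (fun y => ρval (φ t y) • v t y) x = 0)
    -- the phase equation ∂ₜφ + div(φv) - div(mᵛ∇(μ+αp)) = 0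
    (hphase : ∀ t x, deriv (fun s => φ s x) t
        + vdiv (fun y => φ t y • v t y) x
        - vdiv (fun y => mv t y • gradient (fun z => μ t z + α * p t z) y) x = 0)
    -- the velocity transformation ρv = ρu + J
    (htrans : ∀ t x, ρval (φ t x) • v t x = ρval (φ t x) • u t x + J t x) :
    ∀ t x, vdiv (u t) x = 0 := by
  intro t x
  have hsum : ρ₁ + ρ₂ ≠ 0 := by positivity
  set a : ℝ := (ρ₁ - ρ₂) / 2 with ha'
  set b : ℝ := (ρ₁ + ρ₂) / 2 with hb'
  have hbne : b ≠ 0 := by rw [hb']; positivity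
  set G : EuclideanSpace ℝ (Fin d) → EuclideanSpace ℝ (Fin d) :=
    gradient (fun y => μ t y + α * p t y) with hG
  -- smoothness of time slices
  have hslice : ∀ {f : ℝ → EuclideanSpace ℝ (Fin d) → ℝ},
      (ContDiff ℝ (⊤ : ℕ∞) fun z : ℝ × EuclideanSpace ℝ (Fin d) => f z.1 z.2) →
      ContDiff ℝ (⊤ : ℕ∞) (fun y => f t y) :=
    fun hf => hf.comp (contDiff_const.prodMk contDiff_id)
  have hvt : ContDiff ℝ (⊤ : ℕ∞) (v t) := hv.comp (contDiff_const.prodMk contDiff_id)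
  have hGsmooth : ContDiff ℝ (⊤ : ℕ∞) G :=
    contDiff_gradient' ((hslice hμ).add (contDiff_const.mul (hslice hp)))
  have hvx : DifferentiableAt ℝ (v t) x := hvt.differentiable (by simp) x
  have hmvG : DifferentiableAt ℝ (fun y => mv t y • G y) x :=
    ((hslice hmv).differentiable (by simp) x).smul (hGsmooth.differentiable (by simp) x)
  have hφv : DifferentiableAt ℝ (fun y => φ t y • v t y) x :=
    ((hslice hφ).differentiable (by simp) x).smul hvx
  -- the velocity relation u = v + (a/b) mv ∇(μ+αp)
  have huv : u t = fun y => v t y + (a / b) • (mv t y • G y) := by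
    funext y
    have hρy : ρval (φ t y) ≠ 0 := (hρpos t y).ne'
    have h := htrans t y
    rw [hJ t y, hm t y] at h
    have hc : (-(ρ₁ - ρ₂) / 2 * (2 * ρval (φ t y) / (ρ₁ + ρ₂) * mv t y))
        = -(ρval (φ t y) * (a / b * mv t y)) := by
      rw [ha', hb']
      field_simp
    rw [hc, neg_smul] at h
    have h3 : ρval (φ t y) • u t y
        = ρval (φ t y) • v t y + (ρval (φ t y) * (a / b * mv t y)) • G y := by
      rw [h]; abel
    refine smul_right_injective _ hρy ?_
    show ρval (φ t y) • u t y = ρval (φ t y) • (v t y + (a / b) • (mv t y • G y))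
    rw [smul_add, smul_smul, smul_smul, h3, mul_assoc]
  -- divergence of u
  have key1 : vdiv (u t) x = vdiv (v t) x + (a / b) * vdiv (fun y => mv t y • G y) x := by
    rw [huv, vdiv_add' hvx (hmvG.fun_const_smul (a / b)), vdiv_const_smul' _ hmvG]
  -- divergence of ρ v
  have hρv : (fun y => ρval (φ t y) • v t y)
      = fun y => a • (φ t y • v t y) + b • v t y := by
    funext y
    rw [smul_smul, ← add_smul, hρval, ha', hb']
    congr 1
    ring
  have key2 : vdiv (fun y => ρval (φ t y) • v t y) x
      = a * vdiv (fun y => φ t y • v t y) x + b * vdiv (v t) x := by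
    rw [hρv, vdiv_add' (hφv.fun_const_smul a) (hvx.fun_const_smul b),
      vdiv_const_smul' a hφv, vdiv_const_smul' b hvx]
  -- time derivative of ρ
  have hφtdiff : DifferentiableAt ℝ (fun s => φ s x) t :=
    (hφ.comp (contDiff_id.prodMk contDiff_const)).differentiable (by simp) t
  have key3 : deriv (fun s => ρval (φ s x)) t = a * deriv (fun s => φ s x) t := by
    have hfun : (fun s => ρval (φ s x)) = fun s => a * φ s x + b := by
      funext s
      rw [hρval, ha', hb']
      ring
    rw [hfun, deriv_add_const, deriv_const_mul a hφtdiff]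
  -- combine
  have e1 := hcont t x
  rw [key2, key3] at e1
  have e2 := hphase t x
  rw [← hG] at e2
  rw [key1]
  have hMeq : vdiv (fun y => mv t y • G y) x
      = deriv (fun s => φ s x) t + vdiv (fun y => φ t y • v t y) x := by linarith
  rw [hMeq]
  field_simp
  linear_combination e1
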